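/- The linear map φ_a decomposes as φ_a = φ_s ∘ φ_s, where φ_s is the product of reflections φ_s = s_5 s_4 s_3 s_0 s_6 s_5 s_4 s_3 s_0 s_7 s_6 s_5 s_4 s_3 s_0 s_8 s_7 s_6 s_5 s_4 s_3 s_1 s_2 s_0 s_3 s_4 s_0 s_3 s_2. -/
import Mathlib


open Finset Function

/-- The Picard lattice `ℤ^10` with basis `H_f, H_g, e_1, …, e_8`
(coordinates `0, 1, 2, …, 9`). -/
abbrev Pic : Type := Fin 10 → ℤ

/-- The intersection form: `(H_f|H_g) = 1`, `(H_f|H_f) = (H_g|H_g) = 0`,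
`(H_f|e_i) = (H_g|e_i) = 0`, `(e_i|e_j) = -δ_{ij}`. -/
def form (v w : Pic) : ℤ :=
  v 0 * w 1 + v 1 * w 0
    - v 2 * w 2 - v 3 * w 3 - v 4 * w 4 - v 5 * w 5
    - v 6 * w 6 - v 7 * w 7 - v 8 * w 8 - v 9 * w 9

/-- The anticanonical class `δ = 2H_f + 2H_g - (e_1 + ⋯ + e_8)`. -/
def delta : Pic := ![2, 2, -1, -1, -1, -1, -1, -1, -1, -1]

/-- The simple roots `α_0, …, α_8`:
`α_0 = e_1 - e_2`, `α_1 = H_f - H_g`, `α_2 = H_g - e_1 - e_2`,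
`α_3 = e_2 - e_3`, `α_4 = e_3 - e_4`, `α_5 = e_4 - e_5`,
`α_6 = e_5 - e_6`, `α_7 = e_6 - e_7`, `α_8 = e_7 - e_8`. -/
def α : Fin 9 → Pic :=
  ![![0, 0, 1, -1, 0, 0, 0, 0, 0, 0],
    ![1, -1, 0, 0, 0, 0, 0, 0, 0, 0],
    ![0, 1, -1, -1, 0, 0, 0, 0, 0, 0],
    ![0, 0, 0, 1, -1, 0, 0, 0, 0, 0],
    ![0, 0, 0, 0, 1, -1, 0, 0, 0, 0],
    ![0, 0, 0, 0, 0, 1, -1, 0, 0, 0],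
    ![0, 0, 0, 0, 0, 0, 1, -1, 0, 0],
    ![0, 0, 0, 0, 0, 0, 0, 1, -1, 0],
    ![0, 0, 0, 0, 0, 0, 0, 0, 1, -1]]

/-- The reflection `s_i(v) = v + (v|α_i)·α_i`. -/
def s (i : Fin 9) : Pic → Pic := fun v => v + form v (α i) • α i

/-- Images of the basis vectors `H_f, H_g, e_1, …, e_8` under `φ_a`. -/
def phiaImg : Fin 10 → Pic :=
  ![![5, 2, -1, -1, -1, -1, -2, -2, -2, -2],
    ![2, 1, 0, 0, 0, 0, -1, -1, -1, -1],
    ![2, 1, -1, 0, 0, 0, -1, -1, -1, -1],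
    ![2, 1, 0, -1, 0, 0, -1, -1, -1, -1],
    ![2, 1, 0, 0, -1, 0, -1, -1, -1, -1],
    ![2, 1, 0, 0, 0, -1, -1, -1, -1, -1],
    ![1, 0, 0, 0, 0, 0, -1, 0, 0, 0],
    ![1, 0, 0, 0, 0, 0, 0, -1, 0, 0],
    ![1, 0, 0, 0, 0, 0, 0, 0, -1, 0],
    ![1, 0, 0, 0, 0, 0, 0, 0, 0, -1]]

/-- The ℤ-linear map `φ_a : Pic → Pic`. -/
def phia (v : Pic) : Pic := ∑ i : Fin 10, v i • phiaImg i

/-- `φ_s = s_5 s_4 s_3 s_0 s_6 s_5 s_4 s_3 s_0 s_7 s_6 s_5 s_4 s_3 s_0 s_8 s_7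
s_6 s_5 s_4 s_3 s_1 s_2 s_0 s_3 s_4 s_0 s_3 s_2`, acting as the composition of
the reflections. -/
def phis : Pic → Pic :=
  s 5 ∘ s 4 ∘ s 3 ∘ s 0 ∘ s 6 ∘ s 5 ∘ s 4 ∘ s 3 ∘ s 0 ∘ s 7 ∘ s 6 ∘ s 5 ∘
    s 4 ∘ s 3 ∘ s 0 ∘ s 8 ∘ s 7 ∘ s 6 ∘ s 5 ∘ s 4 ∘ s 3 ∘ s 1 ∘ s 2 ∘ s 0 ∘
    s 3 ∘ s 4 ∘ s 0 ∘ s 3 ∘ s 2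

lemma s_add (i : Fin 9) (v w : Pic) : s i (v + w) = s i v + s i w := by
  funext j
  simp only [s, form, Pi.add_apply, Pi.smul_apply, smul_eq_mul]
  ring

lemma s_smul (i : Fin 9) (c : ℤ) (v : Pic) : s i (c • v) = c • s i v := by
  funext j
  simp only [s, form, Pi.smul_apply, smul_eq_mul, Pi.add_apply]
  ring

lemma phis_add (v w : Pic) : phis (v + w) = phis v + phis w := by
  simp only [phis, Function.comp_apply, s_add]

lemma phis_smul (c : ℤ) (v : Pic) : phis (c • v) = c • phis v := by
  simp only [phis, Function.comp_apply, s_smul]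

def phisLin : Pic →ₗ[ℤ] Pic where
  toFun := phis
  map_add' := phis_add
  map_smul' := phis_smul

lemma phis_eq (v : Pic) : phis v = phisLin v := rfl

set_option maxRecDepth 100000 in
lemma key : ∀ i : Fin 10,
    phisLin (phisLin (fun j => if i = j then (1 : ℤ) else 0)) = phiaImg i := by
  decide

/-- `φ_a = φ_s ∘ φ_s`. -/
theorem statement_4 : phia = phis ∘ phis := by
  funext v
  show phia v = phis (phis v)
  rw [phis_eq, phis_eq]
  conv_rhs => rw [pi_eq_sum_univ v]
  rw [map_sum, map_sum]
  simp only [map_smul]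
  unfold phia
  exact Finset.sum_congr rfl fun i _ => by rw [key i]
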